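/- Let L_X and L_Y be Laplacians of undirected unweighted graphs G_X and G_Y on the same node set V, and assume every nontrivial cut of G_Y is nonempty (e.g., G_Y connected). Then the minimum cut mapping distortion ζ_min = min over proper nonempty subsets S ⊂ V of cut_{G_Y}(S, S̄)/cut_{G_X}(S, S̄) satisfies ζ_min ≥ 1/λ_max(L_Y⁺L_X). -/

import Mathlib

/-!
Write `P = L_Y⁺`, which is positive semidefinite, and `T = √P`. If every nontrivial cut of `G_Y`
is nonempty, `G_Y` is connected, so `ker L_Y` consists of the constants and lies in `ker L_X`;
hence `z` may be replaced by its component `P L_Y z` off `ker L_Y` in both quadratic forms.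
With `w = T L_Y z` this gives `zᵀ L_Y z = wᵀ w` and `zᵀ L_X z = wᵀ (T L_X T) w`. Since
`T L_X T` and `T T L_X = L_Y⁺ L_X` have the same characteristic polynomial, `T L_X T ≤ λ_max`
in the Loewner order, so `zᵀ L_X z ≤ λ_max · zᵀ L_Y z` for every `z`.
-/

open Matrix

def IsMoorePenroseInv {N : ℕ} (A B : Matrix (Fin N) (Fin N) ℝ) : Prop :=
  A * B * A = A ∧ B * A * B = B ∧ (A * B)ᵀ = A * B ∧ (B * A)ᵀ = B * A

def indVec {N : ℕ} (S : Finset (Fin N)) : Fin N → ℝ := fun i => if i ∈ S then 1 else 0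

namespace Matrix

variable {n : Type*} [Fintype n]

theorem dotProduct_mulVec_mul {R : Type*} [CommSemiring R] (B C : Matrix n n R) (x y : n → R) :
    x ⬝ᵥ (B * C) *ᵥ y = (Bᵀ *ᵥ x) ⬝ᵥ C *ᵥ y := by
  rw [← mulVec_mulVec, dotProduct_mulVec, ← mulVec_transpose]

theorem add_dotProduct_mulVec_add_of_mulVec_eq_zero {R : Type*} [CommSemiring R]
    {A : Matrix n n R} (hA : A.IsSymm) {v : n → R} (hv : A *ᵥ v = 0) (u : n → R) :
    (u + v) ⬝ᵥ A *ᵥ (u + v) = u ⬝ᵥ A *ᵥ u := by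
  rw [mulVec_add, hv, add_zero, add_dotProduct, dotProduct_mulVec v, ← mulVec_transpose, hA.eq,
    hv, zero_dotProduct, add_zero]

variable [DecidableEq n]

theorem spectrum_mul_comm {K : Type*} [Field K] (A B : Matrix n n K) :
    spectrum K (A * B) = spectrum K (B * A) := by
  ext μ
  rw [mem_spectrum_iff_isRoot_charpoly, mem_spectrum_iff_isRoot_charpoly, charpoly_mul_comm]

theorem hasEigenvalue_mulVecLin_iff_mem_spectrum {K : Type*} [Field K] (A : Matrix n n K) (μ : K) :
    Module.End.HasEigenvalue A.mulVecLin μ ↔ μ ∈ spectrum K A := by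
  rw [← toLin'_apply', Module.End.hasEigenvalue_iff_mem_spectrum, spectrum_toLin']

open scoped MatrixOrder in
theorem IsHermitian.dotProduct_mulVec_le_of_spectrum_le {M : Matrix n n ℝ} (hM : M.IsHermitian)
    {r : ℝ} (hr : ∀ μ ∈ spectrum ℝ M, μ ≤ r) (w : n → ℝ) :
    w ⬝ᵥ M *ᵥ w ≤ r * (w ⬝ᵥ w) := by
  have hle : M ≤ algebraMap ℝ (Matrix n n ℝ) r := le_algebraMap_of_spectrum_le hr hM
  have hpsd := (Matrix.le_iff.mp hle).dotProduct_mulVec_nonneg w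
  rw [Algebra.algebraMap_eq_smul_one, star_trivial, sub_mulVec, dotProduct_sub, smul_mulVec,
    one_mulVec, dotProduct_smul, smul_eq_mul] at hpsd
  linarith

end Matrix

namespace IsMoorePenroseInv

variable {N : ℕ} {A P Q : Matrix (Fin N) (Fin N) ℝ}

theorem unique (hP : IsMoorePenroseInv A P) (hQ : IsMoorePenroseInv A Q) : P = Q := by
  obtain ⟨hP1, hP2, hP3, hP4⟩ := hP
  obtain ⟨hQ1, hQ2, hQ3, hQ4⟩ := hQ
  have hAP : A * P = A * Q := by
    calc A * P = ((A * Q) * (A * P))ᵀ := by rw [← Matrix.mul_assoc, hQ1, hP3]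
      _ = (A * P) * (A * Q) := by rw [transpose_mul, hP3, hQ3]
      _ = A * Q := by rw [← Matrix.mul_assoc, hP1]
  have hPA : P * A = Q * A := by
    calc P * A = ((P * A) * (Q * A))ᵀ := by
          rw [Matrix.mul_assoc, ← Matrix.mul_assoc A, hQ1, hP4]
      _ = (Q * A) * (P * A) := by rw [transpose_mul, hP4, hQ4]
      _ = Q * A := by rw [Matrix.mul_assoc, ← Matrix.mul_assoc A, hP1]
  calc P = P * (A * Q) := by rw [← hAP, ← Matrix.mul_assoc, hP2]
    _ = (Q * A) * Q := by rw [← Matrix.mul_assoc, hPA]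
    _ = Q := hQ2

theorem transpose (hA : A.IsSymm) (hP : IsMoorePenroseInv A P) : IsMoorePenroseInv A Pᵀ := by
  obtain ⟨h1, h2, h3, h4⟩ := hP
  refine ⟨?_, ?_, ?_, ?_⟩
  · simpa only [transpose_mul, hA.eq, Matrix.mul_assoc] using congrArg Matrix.transpose h1
  · simpa only [transpose_mul, hA.eq, Matrix.mul_assoc] using congrArg Matrix.transpose h2
  · have hAP : A * Pᵀ = P * A := by simpa only [transpose_mul, hA.eq] using h4
    rw [hAP, h4]
  · have hPA : Pᵀ * A = A * P := by simpa only [transpose_mul, hA.eq] using h3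
    rw [hPA, h3]

theorem transpose_eq (hA : A.IsSymm) (hP : IsMoorePenroseInv A P) : Pᵀ = P :=
  (hP.transpose hA).unique hP

theorem posSemidef (hA : A.PosSemidef) (hP : IsMoorePenroseInv A P) : P.PosSemidef := by
  have h := hA.mul_mul_conjTranspose_same P
  rwa [conjTranspose_eq_transpose_of_trivial,
    hP.transpose_eq (isHermitian_iff_isSymm.mp hA.isHermitian), hP.2.1] at h

theorem dotProduct_mulVec_eq_of_ker (hP : IsMoorePenroseInv A P) {B : Matrix (Fin N) (Fin N) ℝ}
    (hB : B.IsSymm) (hker : ∀ v, A *ᵥ v = 0 → B *ᵥ v = 0) (x : Fin N → ℝ) :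
    x ⬝ᵥ B *ᵥ x = (P *ᵥ A *ᵥ x) ⬝ᵥ B *ᵥ (P *ᵥ A *ᵥ x) := by
  have hker' : B *ᵥ (x - P *ᵥ A *ᵥ x) = 0 := hker _ <| by
    rw [mulVec_sub, mulVec_mulVec, mulVec_mulVec, hP.1, sub_self]
  simpa only [add_sub_cancel] using
    add_dotProduct_mulVec_add_of_mulVec_eq_zero hB hker' (P *ᵥ A *ᵥ x)

open scoped MatrixOrder in
theorem dotProduct_mulVec_le_of_spectrum_le (hP : IsMoorePenroseInv A P) (hA : A.PosSemidef)
    {B : Matrix (Fin N) (Fin N) ℝ} (hB : B.IsSymm) (hker : ∀ v, A *ᵥ v = 0 → B *ᵥ v = 0)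
    {r : ℝ} (hr : ∀ μ ∈ spectrum ℝ (P * B), μ ≤ r) (x : Fin N → ℝ) :
    x ⬝ᵥ B *ᵥ x ≤ r * (x ⬝ᵥ A *ᵥ x) := by
  set T := CFC.sqrt P
  have hTT : T * T = P := CFC.sqrt_mul_sqrt_self P (hP.posSemidef hA).nonneg
  have hTt : Tᵀ = T := (CFC.sqrt_nonneg P).posSemidef.isHermitian
  set w := T *ᵥ A *ᵥ x
  have hBx : x ⬝ᵥ B *ᵥ x = w ⬝ᵥ (T * B * T) *ᵥ w := by
    rw [hP.dotProduct_mulVec_eq_of_ker hB hker, ← hTT, ← mulVec_mulVec, Matrix.mul_assoc,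
      dotProduct_mulVec_mul, hTt, ← mulVec_mulVec]
  have hAx : x ⬝ᵥ A *ᵥ x = w ⬝ᵥ w := by
    conv_lhs => rw [← hP.1, ← hTT]
    rw [Matrix.mul_assoc, dotProduct_mulVec_mul, (isHermitian_iff_isSymm.mp hA.isHermitian).eq,
      ← mulVec_mulVec, dotProduct_mulVec_mul, hTt]
  have hM : (T * B * T).IsHermitian := isHermitian_iff_isSymm.mpr <| by
    simp only [IsSymm, transpose_mul, hTt, hB.eq, Matrix.mul_assoc]
  have hspec : ∀ μ ∈ spectrum ℝ (T * B * T), μ ≤ r := by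
    rwa [spectrum_mul_comm, ← Matrix.mul_assoc, hTT]
  rw [hBx, hAx]
  exact hM.dotProduct_mulVec_le_of_spectrum_le hspec w

end IsMoorePenroseInv

theorem SimpleGraph.preconnected_of_indVec_dotProduct_ne_zero {N : ℕ} (G : SimpleGraph (Fin N))
    [DecidableRel G.Adj]
    (hG : ∀ S : Finset (Fin N), S.Nonempty → S ≠ Finset.univ →
      indVec S ⬝ᵥ G.lapMatrix ℝ *ᵥ indVec S ≠ 0) :
    G.Preconnected := by
  classical
  intro i j
  by_contra hij
  let S := Finset.univ.filter (G.Reachable i)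
  have hjS : j ∉ S := by simpa [S] using hij
  refine hG S ⟨i, by simp [S]⟩ (fun hS => hjS (hS ▸ Finset.mem_univ j)) ?_
  rw [← toLinearMap₂'_apply', G.lapMatrix_toLinearMap₂'_apply'_eq_zero_iff_forall_adj ℝ]
  intro k l hkl
  have hkl' : G.Reachable i k ↔ G.Reachable i l :=
    ⟨fun h => h.trans hkl.reachable, fun h => h.trans hkl.symm.reachable⟩
  simp only [indVec, S, Finset.mem_filter, Finset.mem_univ, true_and, hkl']

theorem SimpleGraph.Preconnected.lapMatrix_mulVec_eq_zero {V : Type*} [Fintype V]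
    [DecidableEq V] {G : SimpleGraph V} [DecidableRel G.Adj] (hG : G.Preconnected)
    (H : SimpleGraph V) [DecidableRel H.Adj] {v : V → ℝ} (hv : G.lapMatrix ℝ *ᵥ v = 0) :
    H.lapMatrix ℝ *ᵥ v = 0 := by
  rw [SimpleGraph.lapMatrix_mulVec_eq_zero_iff_forall_reachable] at hv ⊢
  exact fun i j _ => hv i j (hG i j)

theorem one_div_ofReal_le_ofReal_div_ofReal_of_le_mul {a b r : ℝ} (ha : 0 ≤ a) (hb : 0 < b)
    (h : a ≤ r * b) : 1 / ENNReal.ofReal r ≤ ENNReal.ofReal b / ENNReal.ofReal a := by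
  rcases ha.eq_or_lt with rfl | ha
  · rw [ENNReal.ofReal_zero, ENNReal.div_zero (ENNReal.ofReal_pos.mpr hb).ne']
    exact le_top
  · have hr : 0 < r := pos_of_mul_pos_left (ha.trans_le h) hb.le
    rw [one_div, ← ENNReal.ofReal_inv_of_pos hr, ← ENNReal.ofReal_div_of_pos ha]
    exact ENNReal.ofReal_le_ofReal <| by rwa [le_div_iff₀ ha, inv_mul_le_iff₀ hr]

theorem min_cut_mapping_distortion_ge_general (N : ℕ)
    (GX GY : SimpleGraph (Fin N)) [DecidableRel GX.Adj] [DecidableRel GY.Adj]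
    (Yp : Matrix (Fin N) (Fin N) ℝ)
    (hYp : IsMoorePenroseInv (GY.lapMatrix ℝ) Yp)
    (hYcut : ∀ S : Finset (Fin N), S.Nonempty → S ≠ Finset.univ →
      indVec S ⬝ᵥ (GY.lapMatrix ℝ).mulVec (indVec S) ≠ 0)
    (lam : ℝ)
    (hlam_max : ∀ μ : ℝ,
      Module.End.HasEigenvalue (Matrix.mulVecLin (Yp * GX.lapMatrix ℝ)) μ → μ ≤ lam) :
    1 / ENNReal.ofReal lam ≤
      ⨅ S : {S : Finset (Fin N) // S.Nonempty ∧ S ≠ Finset.univ},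
        ENNReal.ofReal (indVec S.1 ⬝ᵥ (GY.lapMatrix ℝ).mulVec (indVec S.1)) /
          ENNReal.ofReal (indVec S.1 ⬝ᵥ (GX.lapMatrix ℝ).mulVec (indVec S.1)) := by
  have hX := SimpleGraph.posSemidef_lapMatrix ℝ GX
  have hY := SimpleGraph.posSemidef_lapMatrix ℝ GY
  have hker : ∀ v, GY.lapMatrix ℝ *ᵥ v = 0 → GX.lapMatrix ℝ *ᵥ v = 0 := fun _ hv =>
    (GY.preconnected_of_indVec_dotProduct_ne_zero hYcut).lapMatrix_mulVec_eq_zero GX hv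
  have hspec : ∀ μ ∈ spectrum ℝ (Yp * GX.lapMatrix ℝ), μ ≤ lam := fun μ hμ =>
    hlam_max μ ((hasEigenvalue_mulVecLin_iff_mem_spectrum _ μ).mpr hμ)
  refine le_iInf fun ⟨S, hS, hS'⟩ => one_div_ofReal_le_ofReal_div_ofReal_of_le_mul ?_ ?_ ?_
  · simpa using hX.dotProduct_mulVec_nonneg (indVec S)
  · exact lt_of_le_of_ne (by simpa using hY.dotProduct_mulVec_nonneg (indVec S))
      (hYcut S hS hS').symm
  · exact hYp.dotProduct_mulVec_le_of_spectrum_le hY (GX.isSymm_lapMatrix (R := ℝ)) hker hspec _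

/-- The minimum cut mapping distortion ζ_min = min_S cut_{G_Y}(S,S̄)/cut_{G_X}(S,S̄)
satisfies ζ_min ≥ 1/λ_max(L_Y⁺L_X), where cut values are computed as `zᵀ L z` for the
0-1 indicator vector `z` of `S` (the quotient taken in `ℝ≥0∞`). -/
theorem min_cut_mapping_distortion_ge (N : ℕ)
    (GX GY : SimpleGraph (Fin N)) [DecidableRel GX.Adj] [DecidableRel GY.Adj]
    (Yp : Matrix (Fin N) (Fin N) ℝ)
    (hYp : IsMoorePenroseInv (GY.lapMatrix ℝ) Yp)
    (hYcut : ∀ S : Finset (Fin N), S.Nonempty → S ≠ Finset.univ →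
      indVec S ⬝ᵥ (GY.lapMatrix ℝ).mulVec (indVec S) ≠ 0)
    (lam : ℝ)
    (hlam : Module.End.HasEigenvalue (Matrix.mulVecLin (Yp * GX.lapMatrix ℝ)) lam)
    (hlam_max : ∀ μ : ℝ,
      Module.End.HasEigenvalue (Matrix.mulVecLin (Yp * GX.lapMatrix ℝ)) μ → μ ≤ lam) :
    1 / ENNReal.ofReal lam ≤
      ⨅ S : {S : Finset (Fin N) // S.Nonempty ∧ S ≠ Finset.univ},
        ENNReal.ofReal (indVec S.1 ⬝ᵥ (GY.lapMatrix ℝ).mulVec (indVec S.1)) /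
          ENNReal.ofReal (indVec S.1 ⬝ᵥ (GX.lapMatrix ℝ).mulVec (indVec S.1)) :=
  min_cut_mapping_distortion_ge_general N GX GY Yp hYp hYcut lam hlam_max
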